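/- For fixed x, y > 0 with x ≠ y, the quantity N_α(x,y) = α·(xy)^(α/2)·(x-y)/(x^α - y^α) is strictly decreasing in α > 0. -/

import Mathlib

noncomputable def Nmean (α x y : ℝ) : ℝ :=
  α * (x * y) ^ (α / 2) * (x - y) / (x ^ α - y ^ α)

lemma sinh_lt_mul_cosh {t : ℝ} (ht : 0 < t) : Real.sinh t < t * Real.cosh t := by
  have hmono : StrictMonoOn (fun u : ℝ => u * Real.cosh u - Real.sinh u) (Set.Ici 0) := by
    apply strictMonoOn_of_deriv_pos (convex_Ici 0)
    · fun_prop
    · intro u hu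
      rw [interior_Ici] at hu
      have hd : HasDerivAt (fun u : ℝ => u * Real.cosh u - Real.sinh u)
          (1 * Real.cosh u + u * Real.sinh u - Real.cosh u) u :=
        ((hasDerivAt_id u).mul (Real.hasDerivAt_cosh u)).sub (Real.hasDerivAt_sinh u)
      rw [hd.deriv]
      have := Real.sinh_pos_iff.mpr hu
      nlinarith [Set.mem_Ioi.mp hu]
  have h := hmono (Set.self_mem_Ici) (Set.mem_Ici.mpr ht.le) ht
  simpa using h

lemma sinh_div_strictMono : StrictMonoOn (fun t : ℝ => Real.sinh t / t) (Set.Ioi 0) := by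
  apply strictMonoOn_of_deriv_pos (convex_Ioi 0)
  · exact Real.continuous_sinh.continuousOn.div continuousOn_id
      (fun t ht => ne_of_gt ht)
  · intro t ht
    rw [interior_Ioi] at ht
    have hd : HasDerivAt (fun u : ℝ => Real.sinh u / u)
        ((Real.cosh t * t - Real.sinh t * 1) / t ^ 2) t :=
      (Real.hasDerivAt_sinh t).div (hasDerivAt_id t) (ne_of_gt ht)
    rw [hd.deriv]
    have h1 := sinh_lt_mul_cosh ht
    have h2 : (0:ℝ) < t ^ 2 := pow_pos ht 2
    apply div_pos _ h2
    nlinarith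

lemma nmean_eq {x y : ℝ} (hy : 0 < y) (hxy : y < x) {α : ℝ} (hα : 0 < α) :
    Nmean α x y = (x - y) * (α / (2 * Real.sinh (α * ((Real.log x - Real.log y) / 2)))) := by
  have hx : 0 < x := hy.trans hxy
  set L : ℝ := (Real.log x + Real.log y) / 2 with hL
  set s : ℝ := (Real.log x - Real.log y) / 2 with hs
  have hspos : 0 < s := by
    have := Real.log_lt_log hy hxy
    simp only [hs]; linarith
  have h1 : x ^ α = Real.exp (α * L) * Real.exp (α * s) := by
    rw [Real.rpow_def_of_pos hx, ← Real.exp_add]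
    ring_nf
    simp only [hL, hs]; ring_nf
  have h2 : y ^ α = Real.exp (α * L) * Real.exp (-(α * s)) := by
    rw [Real.rpow_def_of_pos hy, ← Real.exp_add]
    ring_nf
    simp only [hL, hs]; ring_nf
  have h3 : (x * y) ^ (α / 2) = Real.exp (α * L) := by
    rw [Real.rpow_def_of_pos (by positivity), Real.log_mul (ne_of_gt hx) (ne_of_gt hy)]
    ring_nf
    simp only [hL]; ring_nf
  have hsinh : Real.sinh (α * s) = (Real.exp (α * s) - Real.exp (-(α * s))) / 2 :=
    Real.sinh_eq _
  have hsinhpos : 0 < Real.sinh (α * s) := Real.sinh_pos_iff.mpr (by positivity)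
  have hE : Real.exp (α * L) ≠ 0 := Real.exp_ne_zero _
  rw [Nmean, h1, h2, h3]
  rw [show Real.exp (α * L) * Real.exp (α * s) - Real.exp (α * L) * Real.exp (-(α * s))
      = Real.exp (α * L) * (2 * Real.sinh (α * s)) by rw [hsinh]; ring]
  field_simp

theorem stmt10 (x y : ℝ) (hx : 0 < x) (hy : 0 < y) (hxy : x ≠ y)
    (α β : ℝ) (hα : 0 < α) (hαβ : α < β) :
    Nmean β x y < Nmean α x y := by
  have key : ∀ u v : ℝ, 0 < v → v < u → Nmean β u v < Nmean α u v := by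
    intro u v hv huv
    have hβ : 0 < β := hα.trans hαβ
    set s : ℝ := (Real.log u - Real.log v) / 2 with hsdef
    have hspos : 0 < s := by
      have := Real.log_lt_log hv huv
      simp only [hsdef]; linarith
    rw [nmean_eq hv huv hα, nmean_eq hv huv hβ]
    apply mul_lt_mul_of_pos_left _ (by linarith)
    have hsa : 0 < Real.sinh (α * s) := Real.sinh_pos_iff.mpr (by positivity)
    have hsb : 0 < Real.sinh (β * s) := Real.sinh_pos_iff.mpr (by positivity)
    rw [div_lt_div_iff₀ (by positivity) (by positivity)]
    have hmono := sinh_div_strictMono (Set.mem_Ioi.mpr (by positivity : (0:ℝ) < α * s))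
      (Set.mem_Ioi.mpr (by positivity : (0:ℝ) < β * s))
      (by nlinarith : α * s < β * s)
    simp only at hmono
    rw [div_lt_div_iff₀ (by positivity) (by positivity)] at hmono
    nlinarith
  rcases lt_or_gt_of_ne hxy with h | h
  · have symm : ∀ a : ℝ, Nmean a x y = Nmean a y x := by
      intro a
      unfold Nmean
      rw [mul_comm x y, show x - y = -(y - x) by ring,
        show x ^ a - y ^ a = -(y ^ a - x ^ a) by ring, mul_neg, neg_div_neg_eq]
    rw [symm α, symm β]
    exact key y x hx h
  · exact key x y hy h
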